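/- arXiv:math/9908019 — 2 statements merged into one kernel-verified Lean document; each statement's English description precedes it below -/
import Mathlib

section
/- Let V be a finite-dimensional vector space over Q (or any field), and B a reduced finite-dimensional Q-algebra. Then B has at most finitely many Q-subalgebras. -/
/-!
STATEMENT 8: Let V be a finite-dimensional vector space over ℚ (or any field),
and B a reduced finite-dimensional ℚ-algebra (commutative, as in the application:
a finite product of number fields).  Then B has at most finitely many ℚ-subalgebras.
-/


open Module

namespace SubalgFinAux

noncomputable section

local notation "L" => AlgebraicClosure ℚ

variable (B : Type) [CommRing B] [Algebra ℚ B] [FiniteDimensional ℚ B]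

theorem artinian : IsArtinianRing B := IsArtinianRing.of_finite ℚ B

/-- Counting: for reduced finite-dimensional ℚ-algebras, the number of algebra
homomorphisms to the algebraic closure equals the dimension. -/
theorem card_algHom_eq [IsReduced B] :
    Nat.card (B →ₐ[ℚ] L) = finrank ℚ B := by
  classical
  haveI := artinian B
  haveI := (IsArtinianRing.setOfPred_isMaximal_finite B).to_subtype
  letI : ∀ I : {I : Ideal B | I.IsMaximal}, I.1.IsMaximal := fun I => I.2
  letI : ∀ I : {I : Ideal B | I.IsMaximal}, Field (B ⧸ I.1) :=
    fun I => Ideal.Quotient.field I.1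
  haveI : ∀ I : {I : Ideal B | I.IsMaximal}, FiniteDimensional ℚ (B ⧸ I.1) :=
    fun I => Module.Finite.quotient ℚ _
  -- the sigma-type classification of algebra homs to L
  let F : (Σ I : {I : Ideal B | I.IsMaximal}, ((B ⧸ I.1) →ₐ[ℚ] L)) → (B →ₐ[ℚ] L) :=
    fun p => p.2.comp (Ideal.Quotient.mkₐ ℚ p.1.1)
  have hker : ∀ p : (Σ I : {I : Ideal B | I.IsMaximal}, ((B ⧸ I.1) →ₐ[ℚ] L)),
      RingHom.ker (F p) = p.1.1 := by
    intro ⟨I, ψ⟩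
    ext x
    simp only [RingHom.mem_ker]
    constructor
    · intro hx
      have : ψ (Ideal.Quotient.mk I.1 x) = 0 := hx
      have h0 : Ideal.Quotient.mk I.1 x = 0 :=
        (map_eq_zero_iff _ (RingHom.injective (ψ : (B ⧸ I.1) →+* L))).mp this
      exact (Ideal.Quotient.eq_zero_iff_mem).mp h0
    · intro hx
      have h0 : Ideal.Quotient.mk I.1 x = 0 := (Ideal.Quotient.eq_zero_iff_mem).mpr hx
      show ψ (Ideal.Quotient.mk I.1 x) = 0
      rw [h0, map_zero]
  have hFinj : Function.Injective F := by
    rintro ⟨I, ψ⟩ ⟨J, χ⟩ h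
    have hIJ : I = J := by
      have := hker ⟨I, ψ⟩
      rw [h, hker ⟨J, χ⟩] at this
      exact Subtype.ext this.symm
    subst hIJ
    refine Sigma.ext rfl ?_
    simp only [heq_eq_eq]
    ext x
    obtain ⟨y, rfl⟩ := Ideal.Quotient.mk_surjective x
    exact DFunLike.congr_fun h y
  have hFsurj : Function.Surjective F := by
    intro σ
    have hprime : (RingHom.ker (σ : B →+* L)).IsPrime := RingHom.ker_isPrime _
    have hmax : (RingHom.ker (σ : B →+* L)).IsMaximal :=
      (IsArtinianRing.isPrime_iff_isMaximal _).mp hprime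
    refine ⟨⟨⟨RingHom.ker (σ : B →+* L), hmax⟩,
      Ideal.Quotient.liftₐ _ σ (fun a ha => ha)⟩, ?_⟩
    ext x
    rfl
  have hcard : Nat.card (B →ₐ[ℚ] L) =
      Nat.card (Σ I : {I : Ideal B | I.IsMaximal}, ((B ⧸ I.1) →ₐ[ℚ] L)) :=
    (Nat.card_congr (Equiv.ofBijective F ⟨hFinj, hFsurj⟩)).symm
  -- CRT: B ≅ ∏ B/I as ℚ-algebras
  let Ψ : B →ₐ[ℚ] (∀ I : {I : Ideal B | I.IsMaximal}, B ⧸ I.1) :=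
    Pi.algHom ℚ _ (fun I => Ideal.Quotient.mkₐ ℚ I.1)
  have hinj : Function.Injective Ψ := by
    rw [injective_iff_map_eq_zero]
    intro x hx
    have hnil : x ∈ nilradical B := by
      rw [nilradical_eq_sInf]
      refine Ideal.mem_sInf.mpr ?_
      intro J hJ
      have hJm : J.IsMaximal := (IsArtinianRing.isPrime_iff_isMaximal J).mp hJ
      have h0 : Ideal.Quotient.mk J x = 0 := congrFun hx ⟨J, hJm⟩
      exact Ideal.Quotient.eq_zero_iff_mem.mp h0
    rw [nilradical_eq_zero] at hnil
    simpa using hnil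
  have hsurj : Function.Surjective Ψ := by
    have hco : Pairwise (Function.onFun IsCoprime (fun I : {I : Ideal B | I.IsMaximal} => I.1)) := by
      intro I J h
      exact Ideal.isCoprime_iff_sup_eq.mpr <| I.2.coprime_of_ne J.2 <| by
        rwa [Ne, Subtype.coe_inj]
    have hs := Ideal.quotientInfToPiQuotient_surj hco
    intro y
    obtain ⟨xbar, hx⟩ := hs y
    obtain ⟨x, rfl⟩ := Ideal.Quotient.mk_surjective xbar
    refine ⟨x, ?_⟩
    funext I
    have := congrFun hx I
    rwa [Ideal.quotientInfToPiQuotient_mk'] at this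
  let e : B ≃ₐ[ℚ] (∀ I : {I : Ideal B | I.IsMaximal}, B ⧸ I.1) :=
    AlgEquiv.ofBijective Ψ ⟨hinj, hsurj⟩
  haveI : Fintype {I : Ideal B | I.IsMaximal} := Fintype.ofFinite _
  have hfr : finrank ℚ B = ∑ I : {I : Ideal B | I.IsMaximal}, finrank ℚ (B ⧸ I.1) := by
    rw [e.toLinearEquiv.finrank_eq, Module.finrank_pi_fintype]
  rw [hcard, Nat.card_eq_fintype_card, Fintype.card_sigma, hfr]
  refine Finset.sum_congr rfl ?_
  intro I _
  haveI : Algebra.IsSeparable ℚ (B ⧸ I.1) := Algebra.IsSeparable.of_integral ℚ _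
  rw [← AlgHom.card ℚ (B ⧸ I.1) L]

/-- The algebra homomorphisms span the full dual-type space of linear maps. -/
theorem algHom_span [IsReduced B] :
    Submodule.span L (Set.range (fun σ : B →ₐ[ℚ] L => σ.toLinearMap)) = ⊤ := by
  haveI : Fintype (B →ₐ[ℚ] L) := Fintype.ofFinite _
  have hcard : Fintype.card (B →ₐ[ℚ] L) = finrank L (B →ₗ[ℚ] L) := by
    rw [Module.finrank_linearMap_self ℚ L B, ← card_algHom_eq B, Nat.card_eq_fintype_card]
  exact (linearIndependent_algHom_toLinearMap ℚ B L).span_eq_top_of_card_eq_finrank' hcard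

/-- Evaluation of ℚ-linearly independent elements at all homomorphisms gives
L-linearly independent functions. -/
theorem eval_linearIndependent [IsReduced B] {r : ℕ} {b : Fin r → B}
    (hb : LinearIndependent ℚ b) :
    LinearIndependent L (fun i (σ : B →ₐ[ℚ] L) => σ (b i)) := by
  classical
  haveI : Fintype (B →ₐ[ℚ] L) := Fintype.ofFinite _
  rw [Fintype.linearIndependent_iff]
  intro c hc j
  -- the linear functional f ↦ ∑ i, c i * f (b i) on (B →ₗ[ℚ] L)
  let T : (B →ₗ[ℚ] L) →ₗ[L] L :=
    { toFun := fun f => ∑ i, c i * f (b i)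
      map_add' := by
        intro f g
        simp [mul_add, Finset.sum_add_distrib]
      map_smul' := by
        intro a f
        simp [Finset.mul_sum, mul_left_comm] }
  have hT : ∀ σ : B →ₐ[ℚ] L, T σ.toLinearMap = 0 := by
    intro σ
    have := congrFun hc σ
    simpa [T] using this
  have hT0 : T = 0 := by
    have hle : (⊤ : Submodule L (B →ₗ[ℚ] L)) ≤ LinearMap.ker T := by
      rw [← algHom_span B]
      refine Submodule.span_le.mpr ?_
      rintro _ ⟨σ, rfl⟩
      exact hT σ
    ext f
    exact hle (Submodule.mem_top)
  -- dual functional picking out the j-th coordinate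
  let bW : Basis (Fin r) ℚ (Submodule.span ℚ (Set.range b)) := Basis.span hb
  obtain ⟨g, hg⟩ := LinearMap.exists_extend (V' := ℚ) (bW.coord j)
  let Fj : B →ₗ[ℚ] L := (Algebra.linearMap ℚ L).comp g
  have hFj : ∀ i, Fj (b i) = if i = j then 1 else 0 := by
    intro i
    have hmem : b i ∈ Submodule.span ℚ (Set.range b) :=
      Submodule.subset_span ⟨i, rfl⟩
    have h1 : g (b i) = bW.repr ⟨b i, hmem⟩ j := by
      have := congrFun (congrArg (fun h => h.toFun) hg) ⟨b i, hmem⟩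
      simpa using this
    have h2 : bW.repr ⟨b i, hmem⟩ j = if i = j then 1 else 0 := by
      have hspan : bW i = ⟨b i, hmem⟩ := by
        ext
        simp [bW, Basis.span_apply]
      rw [← hspan, Basis.repr_self, Finsupp.single_apply]
    rw [show Fj (b i) = algebraMap ℚ L (g (b i)) from rfl, h1, h2]
    split <;> simp
  have := congrFun (congrArg (fun (t : (B →ₗ[ℚ] L) →ₗ[L] L) => t.toFun) hT0) Fj
  simp only [T, LinearMap.coe_mk, AddHom.coe_mk] at this
  rw [show (0 : (B →ₗ[ℚ] L) →ₗ[L] L).toFun Fj = 0 from rfl] at this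
  calc c j = ∑ i, c i * Fj (b i) := by
        rw [Finset.sum_congr rfl (fun i _ => by rw [hFj i])]
        simp [Finset.sum_ite_eq', Finset.mem_univ]
      _ = 0 := this

end

end SubalgFinAux

theorem finitely_many_subalgebras_of_reduced_finiteDimensional
    (V : Type) [AddCommGroup V] [Module ℚ V] [FiniteDimensional ℚ V]
    (B : Type) [CommRing B] [Algebra ℚ B] [IsReduced B] [FiniteDimensional ℚ B] :
    Finite (Subalgebra ℚ B) := by
  classical
  haveI : Finite (B →ₐ[ℚ] AlgebraicClosure ℚ) := Finite.algHom ℚ B _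
  -- closure operator: subalgebra cut out by a relation on homomorphisms
  let cl : ((B →ₐ[ℚ] AlgebraicClosure ℚ) → (B →ₐ[ℚ] AlgebraicClosure ℚ) → Prop) →
      Subalgebra ℚ B := fun R =>
    { carrier := {b | ∀ σ τ, R σ τ → σ b = τ b}
      mul_mem' := fun ha hb σ τ h => by
        simp only [map_mul]
        rw [ha σ τ h, hb σ τ h]
      one_mem' := fun σ τ _ => by simp
      add_mem' := fun ha hb σ τ h => by
        simp only [map_add]
        rw [ha σ τ h, hb σ τ h]
      zero_mem' := fun σ τ _ => by simp
      algebraMap_mem' := fun q σ τ _ => by simp [AlgHom.commutes] }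
  let Φ : Subalgebra ℚ B →
      ((B →ₐ[ℚ] AlgebraicClosure ℚ) → (B →ₐ[ℚ] AlgebraicClosure ℚ) → Prop) :=
    fun S σ τ => ∀ s ∈ S, σ s = τ s
  have key : ∀ S : Subalgebra ℚ B, cl (Φ S) = S := by
    intro S
    have hle : S ≤ cl (Φ S) := fun s hs σ τ h => h s hs
    set S' := cl (Φ S) with hS'def
    -- instances
    haveI : IsReduced ↥S := isReduced_of_injective (S.val : ↥S →+* B) Subtype.val_injective
    haveI : IsReduced ↥S' := isReduced_of_injective (S'.val : ↥S' →+* B) Subtype.val_injective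
    haveI : FiniteDimensional ℚ ↥S :=
      inferInstanceAs (FiniteDimensional ℚ (Subalgebra.toSubmodule S))
    haveI : FiniteDimensional ℚ ↥S' :=
      inferInstanceAs (FiniteDimensional ℚ (Subalgebra.toSubmodule S'))
    -- the restriction map and its kernel setoid
    let q : (B →ₐ[ℚ] AlgebraicClosure ℚ) → (↥S →ₐ[ℚ] AlgebraicClosure ℚ) :=
      fun σ => σ.comp S.val
    let st := Setoid.ker q
    haveI : Finite (Quotient st) := Quotient.finite _
    haveI : Fintype (Quotient st) := Fintype.ofFinite _
    -- the number of classes is at most finrank ℚ S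
    have hclasses : Fintype.card (Quotient st) ≤ finrank ℚ ↥S := by
      have hinj : Function.Injective (Quotient.lift q (fun a b (h : q a = q b) => h)) := by
        intro x y
        refine Quotient.inductionOn₂ x y ?_
        intro a b h
        exact Quotient.sound h
      calc Fintype.card (Quotient st)
          = Nat.card (Quotient st) := (Nat.card_eq_fintype_card).symm
        _ ≤ Nat.card (↥S →ₐ[ℚ] AlgebraicClosure ℚ) :=
            Nat.card_le_card_of_injective _ hinj
        _ = finrank ℚ ↥S := SubalgFinAux.card_algHom_eq ↥S
    -- a basis of S' gives linearly independent class functions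
    let r := finrank ℚ ↥S'
    let bs : Basis (Fin r) ℚ ↥S' := Module.finBasis ℚ ↥S'
    let b : Fin r → B := fun i => (bs i : B)
    have hb : LinearIndependent ℚ b :=
      bs.linearIndependent.map' (Subalgebra.toSubmodule S').subtype
        (Submodule.ker_subtype _)
    have hv := SubalgFinAux.eval_linearIndependent B hb
    have hconst : ∀ i (σ τ : B →ₐ[ℚ] AlgebraicClosure ℚ), q σ = q τ → σ (b i) = τ (b i) := by
      intro i σ τ h
      have hmem : b i ∈ S' := (bs i).2
      refine hmem σ τ ?_
      intro s hs
      exact DFunLike.congr_fun h (⟨s, hs⟩ : ↥S)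
    let w : Fin r → Quotient st → AlgebraicClosure ℚ := fun i =>
      Quotient.lift (fun σ => σ (b i)) (fun σ τ h => hconst i σ τ h)
    have hw : LinearIndependent (AlgebraicClosure ℚ) w := by
      have hcomp : (fun i (σ : B →ₐ[ℚ] AlgebraicClosure ℚ) => σ (b i)) =
          (LinearMap.funLeft (AlgebraicClosure ℚ) (AlgebraicClosure ℚ)
            (fun σ => Quotient.mk st σ)) ∘ w := rfl
      exact LinearIndependent.of_comp _ (hcomp ▸ hv)
    have hr : r ≤ Fintype.card (Quotient st) := by
      have := hw.fintype_card_le_finrank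
      simpa [Module.finrank_pi] using this
    have hfinrank : finrank ℚ ↥S' ≤ finrank ℚ ↥S := le_trans hr hclasses
    exact (Subalgebra.eq_of_le_of_finrank_le hle hfinrank).symm
  have hΦinj : Function.Injective Φ := by
    intro S T h
    rw [← key S, ← key T, h]
  exact Finite.of_injective Φ hΦinj
end

section
/- Let X be a smooth projective variety over C of dimension n, and suppose a descending filtration F^• on CH^r(X,m)_Q is defined via an injective comparison into graded pieces Ext^ν(Q(0), H^{2r−m−ν}(X)(r)) compatible with the Lefschetz operator L, where the hard Lefschetz isomorphism L^{n−2r+m+ν} : H^{2r−m−ν}(X)(r) ≅ H^{2n−2r+m+ν}(X)(n−r) holds. If CH^{s}(X,m) = 0 whenever s > n + m, then Gr^ν_F CH^r(X,m)_Q = 0 for all ν ≥ r+1. -/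
theorem Function.Injective.of_comm_square {α β γ δ : Type*} {f : α → β} {g : α → γ}
    {h : β → δ} {k : γ → δ} (hcomm : ∀ x, h (f x) = k (g x))
    (hg : Function.Injective g) (hk : Function.Injective k) : Function.Injective f :=
  Function.Injective.of_comp (f := h) fun x y hxy =>
    hg (hk (by simpa only [Function.comp_apply, hcomm] using hxy))

theorem graded_piece_vanishes_of_hard_lefschetz
    (n m r : ℕ) (hr : r ≤ n)
    (Gr : ℕ → ℕ → Type) [∀ ν s, AddCommGroup (Gr ν s)] [∀ ν s, Module ℚ (Gr ν s)]
    (E : ℕ → ℕ → Type) [∀ ν s, AddCommGroup (E ν s)] [∀ ν s, Module ℚ (E ν s)]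
    -- the (injective) higher Abel–Jacobi maps on graded pieces
    (ι : ∀ ν s, Gr ν s →ₗ[ℚ] E ν s)
    (hι : ∀ ν s, Function.Injective (ι ν s))
    -- the Lefschetz operator L^{n−2s+m+ν} on Chow groups, raising codimension to n−s+m+ν
    (Lchow : ∀ ν s, Gr ν s →ₗ[ℚ] Gr ν (n - s + m + ν))
    -- the Lefschetz operator on the Ext groups
    (Lext : ∀ ν s, E ν s →ₗ[ℚ] E ν (n - s + m + ν))
    -- hard Lefschetz: the right vertical arrow is bijective
    (hhard : ∀ ν s, Function.Bijective (Lext ν s))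
    -- commutativity of the diagram
    (hcomm : ∀ ν s x, ι ν (n - s + m + ν) (Lchow ν s x) = Lext ν s (ι ν s x))
    -- vanishing of Chow groups (hence of their graded pieces) in codimension > n + m
    (hvanish : ∀ ν s, n + m < s → Subsingleton (Gr ν s)) :
    ∀ ν, r + 1 ≤ ν → Subsingleton (Gr ν r) := by
  intro ν hν
  have hLchow_injective : Function.Injective (Lchow ν r) :=
    .of_comm_square (hcomm ν r) (hι ν r) (hhard ν r).injective
  -- `r ≤ n` makes `n - r` honest, so the target codimension is at least `n + m + 1`.
  have := hvanish ν (n - r + m + ν) (by omega)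
  exact hLchow_injective.subsingleton
end
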